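/- For s,t with 1/3 ≤ s,t ≤ 2/3 and s ∉ [4/9,5/9] or t ∉ [4/9,5/9], the simplex R(s,t) (vertices as above) satisfies ξ(R(s,t)) = 6·max{2/3, 2−3s, 3s−1, 2−3t, 3t−1} + 1 > 5. -/

import Mathlib

open Finset MeasureTheory

/-- The unit cube `[0,1]^n` in `ℝ^n`. -/
def unitCube (n : ℕ) : Set (Fin n → ℝ) := {x | ∀ i, 0 ≤ x i ∧ x i ≤ 1}

/-- The set of vertices of the unit cube, i.e. `{0,1}^n`. -/
def cubeVerts (n : ℕ) : Set (Fin n → ℝ) := {x | ∀ i, x i = 0 ∨ x i = 1}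

/-- The (solid) simplex spanned by `n+1` points. -/
def simplexSet {n : ℕ} (v : Fin (n + 1) → (Fin n → ℝ)) : Set (Fin n → ℝ) :=
  convexHull ℝ (Set.range v)

/-- The centroid (center of gravity) of the simplex with vertices `v`. -/
noncomputable def simplexCentroid {n : ℕ} (v : Fin (n + 1) → (Fin n → ℝ)) : Fin n → ℝ :=
  ((n : ℝ) + 1)⁻¹ • ∑ j, v j

/-- The homothety of the simplex with vertices `v`, with center the centroid and ratio `σ`. -/
noncomputable def homSimplex {n : ℕ} (v : Fin (n + 1) → (Fin n → ℝ)) (σ : ℝ) : Set (Fin n → ℝ) :=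
  (fun x => simplexCentroid v + σ • (x - simplexCentroid v)) '' simplexSet v

/-- `ξ(S) = min {σ ≥ 1 : Q_n ⊆ σS}`. -/
noncomputable def xiVal {n : ℕ} (v : Fin (n + 1) → (Fin n → ℝ)) : ℝ :=
  sInf {σ : ℝ | 1 ≤ σ ∧ unitCube n ⊆ homSimplex v σ}

/-- A function `ℝ^n → ℝ` is an affine polynomial of degree at most 1. -/
def IsAffinePoly {n : ℕ} (f : (Fin n → ℝ) → ℝ) : Prop :=
  ∃ a : Fin n → ℝ, ∃ b : ℝ, ∀ x, f x = ∑ i, a i * x i + b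

/-- `lam` is the family of basic Lagrange polynomials of the simplex with vertices `v`. -/
def IsLagrangeBasis {n : ℕ} (v : Fin (n + 1) → (Fin n → ℝ))
    (lam : Fin (n + 1) → (Fin n → ℝ) → ℝ) : Prop :=
  (∀ j, IsAffinePoly (lam j)) ∧ ∀ j k, lam j (v k) = if j = k then 1 else 0

/-- The `i`-th axial diameter of a set `S ⊆ ℝ^n`: the supremum of lengths of segments
in `S` parallel to the `i`-th coordinate axis. -/
noncomputable def axialDiam {n : ℕ} (S : Set (Fin n → ℝ)) (i : Fin n) : ℝ :=
  sSup {t : ℝ | ∃ x ∈ S, ∃ y ∈ S, (∀ k, k ≠ i → x k = y k) ∧ y i - x i = t}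

/-- The family of simplices `R(s,t) ⊂ ℝ⁵`. -/
noncomputable def Rverts (s t : ℝ) : Fin 6 → (Fin 5 → ℝ) :=
  ![![s, 1, 1/3, 1, 1], ![s, 0, 1/3, 1, 1], ![s, 2 - 3*t, 1/3, 0, 1],
    ![2 - 3*s, t, 0, 1/3, 0], ![0, t, 1, 1/3, 0], ![1, t, 1, 1/3, 0]]

/-!
The Lagrange polynomials `λ₀, …, λₙ` of a simplex `S` are its barycentric coordinates, so `x` lies
in the homothetic copy `σS` (`σ > 0`, centre the centroid, where every `λₖ = 1/(n+1)`) exactly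
when `1 - (n+1) λₖ(x) ≤ σ` for all `k`. Hence `ξ(S)` is the least `σ ≥ 1` bounding these numbers
on the cube.

For `R(s,t)` the six Lagrange polynomials are explicit, and on `Q₅` each is bounded below by
`-A` with `A = max {2/3, 2-3s, 3s-1, 2-3t, 3t-1}`; each of the five candidates is attained by some
`λₖ` at a vertex of the cube, so `ξ = 6A + 1`. Outside `[4/9,5/9]²` one of the four linear
terms exceeds `2/3`, whence `ξ > 5`.
-/

open AffineMap

section Lagrange

variable {n : ℕ}

theorem IsAffinePoly.exists_affineMap {f : (Fin n → ℝ) → ℝ} (hf : IsAffinePoly f) :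
    ∃ g : (Fin n → ℝ) →ᵃ[ℝ] ℝ, ⇑g = f := by
  obtain ⟨a, b, hf⟩ := hf
  refine ⟨(∑ i, a i • LinearMap.proj i : (Fin n → ℝ) →ₗ[ℝ] ℝ).toAffineMap + const ℝ _ b, ?_⟩
  funext x
  simp [hf]

theorem IsAffinePoly.apply_lineMap {f : (Fin n → ℝ) → ℝ} (hf : IsAffinePoly f)
    (x y : Fin n → ℝ) (r : ℝ) : f (lineMap x y r) = lineMap (f x) (f y) r := by
  obtain ⟨g, rfl⟩ := hf.exists_affineMap
  exact g.apply_lineMap x y r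

variable {v : Fin (n + 1) → Fin n → ℝ} {lam : Fin (n + 1) → (Fin n → ℝ) → ℝ}

theorem IsLagrangeBasis.affineIndependent (h : IsLagrangeBasis v lam) :
    AffineIndependent ℝ v := by
  rw [_root_.affineIndependent_iff]
  intro s w hw hwv j hj
  obtain ⟨g, hg⟩ := (h.1 j).exists_affineMap
  calc w j = ∑ k ∈ s, w k * g (v k) := by simp [hg, h.2, hj]
    _ = ∑ k ∈ s, w k * (g.linear (v k) + g 0) := by
        refine Finset.sum_congr rfl fun k _ => ?_
        rw [congrFun g.decomp (v k)]
        rfl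
    _ = g.linear (∑ k ∈ s, w k • v k) + (∑ k ∈ s, w k) * g 0 := by
        simp [mul_add, Finset.sum_add_distrib, Finset.sum_mul]
    _ = 0 := by simp [hw, hwv]

theorem IsLagrangeBasis.affineSpan_eq_top (h : IsLagrangeBasis v lam) :
    affineSpan ℝ (Set.range v) = ⊤ :=
  h.affineIndependent.affineSpan_eq_top_iff_card_eq_finrank_add_one.mpr (by simp)

theorem IsLagrangeBasis.exists_affineBasis (h : IsLagrangeBasis v lam) :
    ∃ b : AffineBasis (Fin (n + 1)) ℝ (Fin n → ℝ), ⇑b = v ∧ ∀ j, ⇑(b.coord j) = lam j := by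
  let b : AffineBasis (Fin (n + 1)) ℝ (Fin n → ℝ) := ⟨v, h.affineIndependent, h.affineSpan_eq_top⟩
  refine ⟨b, rfl, fun j => ?_⟩
  obtain ⟨g, hg⟩ := (h.1 j).exists_affineMap
  rw [← hg]
  congr 1
  refine AffineMap.ext_on b.tot ?_
  rintro - ⟨k, rfl⟩
  change b.coord j (b k) = g (v k)
  rw [b.coord_apply, hg, h.2 j k]

theorem IsLagrangeBasis.mem_simplexSet_iff (h : IsLagrangeBasis v lam) {x : Fin n → ℝ} :
    x ∈ simplexSet v ↔ ∀ k, 0 ≤ lam k x := by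
  obtain ⟨b, rfl, hb⟩ := h.exists_affineBasis
  simp [simplexSet, b.convexHull_eq_nonneg_coord, hb]

theorem IsLagrangeBasis.apply_simplexCentroid (h : IsLagrangeBasis v lam) (k : Fin (n + 1)) :
    lam k (simplexCentroid v) = ((n : ℝ) + 1)⁻¹ := by
  obtain ⟨b, rfl, hb⟩ := h.exists_affineBasis
  have hc : simplexCentroid b = Finset.univ.centroid ℝ b := by
    rw [Finset.centroid, Finset.affineCombination_eq_linear_combination]
    · simp [simplexCentroid, Finset.smul_sum]
    · simp [mul_inv_cancel₀ (by positivity : (n : ℝ) + 1 ≠ 0)]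
  rw [← hb, hc, b.coord_apply_centroid (Finset.mem_univ k)]
  simp

theorem mem_homSimplex_iff_lineMap_mem {σ : ℝ} (hσ : σ ≠ 0) {x : Fin n → ℝ} :
    x ∈ homSimplex v σ ↔ lineMap (simplexCentroid v) x σ⁻¹ ∈ simplexSet v := by
  constructor
  · rintro ⟨y, hy, rfl⟩
    simpa only [lineMap_apply_module', add_sub_cancel_left, smul_smul, inv_mul_cancel₀ hσ,
      one_smul, sub_add_cancel] using hy
  · intro hx
    refine ⟨_, hx, ?_⟩
    simp only [lineMap_apply_module', add_sub_cancel_right, smul_smul, mul_inv_cancel₀ hσ,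
      one_smul, add_sub_cancel]

theorem IsLagrangeBasis.mem_homSimplex_iff (h : IsLagrangeBasis v lam) {σ : ℝ} (hσ : 0 < σ)
    {x : Fin n → ℝ} : x ∈ homSimplex v σ ↔ ∀ k, 1 - ((n : ℝ) + 1) * lam k x ≤ σ := by
  rw [mem_homSimplex_iff_lineMap_mem hσ.ne', h.mem_simplexSet_iff]
  refine forall_congr' fun k => ?_
  have hn : (0 : ℝ) < (n : ℝ) + 1 := by positivity
  have key : σ * ((n : ℝ) + 1) * lam k (lineMap (simplexCentroid v) x σ⁻¹)
      = σ - (1 - ((n : ℝ) + 1) * lam k x) := by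
    rw [(h.1 k).apply_lineMap, h.apply_simplexCentroid, lineMap_apply_ring']
    field_simp
    ring
  rw [← mul_nonneg_iff_of_pos_left (mul_pos hσ hn), key, sub_nonneg]

theorem IsLagrangeBasis.xiVal_eq (h : IsLagrangeBasis v lam) {M : ℝ}
    (hM : IsLeast {σ | 1 ≤ σ ∧ ∀ x ∈ unitCube n, ∀ k, 1 - ((n : ℝ) + 1) * lam k x ≤ σ} M) :
    xiVal v = M := by
  rw [xiVal, ← hM.csInf_eq]
  congr 1
  ext σ
  refine and_congr_right fun hσ => ?_
  simp only [Set.subset_def, h.mem_homSimplex_iff (zero_lt_one.trans_le hσ)]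

end Lagrange

section Rst

variable (s t : ℝ)

noncomputable def lagrangeCoeffR : Fin 6 → Fin 5 → ℝ :=
  ![![0, 1, 0, 2 - 3*t, 3*t - 4/3], ![0, -1, 0, 3*t - 1, 5/3 - 3*t], ![0, 0, 0, -1, 2/3],
    ![0, 0, -1, 0, -2/3], ![-1, 0, 3*s - 1, 0, 3*s - 5/3], ![1, 0, 2 - 3*s, 0, 4/3 - 3*s]]

noncomputable def lagrangeConstR : Fin 6 → ℝ :=
  ![-2/3, 1/3, 1/3, 1, 2 - 3*s, 3*s - 2]

noncomputable def lagrangeR (k : Fin 6) (x : Fin 5 → ℝ) : ℝ :=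
  ∑ i, lagrangeCoeffR s t k i * x i + lagrangeConstR s k

noncomputable def maxNegLagrangeR : ℝ :=
  max (2/3) (max (2 - 3*s) (max (3*s - 1) (max (2 - 3*t) (3*t - 1))))

theorem isLagrangeBasis_lagrangeR : IsLagrangeBasis (Rverts s t) (lagrangeR s t) := by
  refine ⟨fun k => ⟨_, _, fun _ => rfl⟩, fun j k => ?_⟩
  fin_cases j <;> fin_cases k <;>
    simp only [lagrangeR, lagrangeCoeffR, lagrangeConstR, Fin.sum_univ_five, Fin.isValue,
      Matrix.cons_val, Matrix.cons_val_zero, Matrix.cons_val_one, Matrix.cons_val',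
      Matrix.cons_val_fin_one, Fin.reduceFinMk, Fin.zero_eta, Fin.mk_one, Nat.reduceAdd, Rverts,
      Fin.reduceEq, ↓reduceIte] <;> ring

theorem le_maxNegLagrangeR : 2/3 ≤ maxNegLagrangeR s t ∧ 2 - 3*s ≤ maxNegLagrangeR s t ∧
    3*s - 1 ≤ maxNegLagrangeR s t ∧ 2 - 3*t ≤ maxNegLagrangeR s t ∧
    3*t - 1 ≤ maxNegLagrangeR s t := by
  simp only [maxNegLagrangeR, le_max_iff, le_refl, true_or, or_true, and_self]

variable {s t}

theorem neg_maxNegLagrangeR_le (hs : s ∈ Set.Icc (1/3 : ℝ) (2/3))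
    (ht : t ∈ Set.Icc (1/3 : ℝ) (2/3)) {x : Fin 5 → ℝ} (hx : x ∈ unitCube 5) (k : Fin 6) :
    -maxNegLagrangeR s t ≤ lagrangeR s t k x := by
  obtain ⟨hA0, hA1, hA2, hA3, hA4⟩ := le_maxNegLagrangeR s t
  set A := maxNegLagrangeR s t
  obtain ⟨hx0, hx0'⟩ := hx 0
  obtain ⟨hx1, hx1'⟩ := hx 1
  obtain ⟨hx2, hx2'⟩ := hx 2
  obtain ⟨hx3, hx3'⟩ := hx 3
  obtain ⟨hx4, hx4'⟩ := hx 4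
  obtain ⟨hs, hs'⟩ := hs
  obtain ⟨ht, ht'⟩ := ht
  have h1x4 : 0 ≤ 1 - x 4 := by linarith
  -- each `lagrangeR s t k x + A` is a combination of `x i`, `1 - x i` with nonnegative coefficients
  fin_cases k <;>
    simp only [lagrangeR, lagrangeCoeffR, lagrangeConstR, Fin.sum_univ_five, Fin.isValue,
      Matrix.cons_val, Matrix.cons_val_zero, Matrix.cons_val_one, Matrix.cons_val',
      Matrix.cons_val_fin_one, Fin.reduceFinMk, Fin.zero_eta, Fin.mk_one] <;>
    linarith [mul_nonneg (by linarith : 0 ≤ 2 - 3*t) hx3, mul_nonneg (by linarith : 0 ≤ 3*t - 1) hx3,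
      mul_nonneg (by linarith : 0 ≤ 3*s - 1) hx2, mul_nonneg (by linarith : 0 ≤ 2 - 3*s) hx2,
      mul_nonneg (by linarith : 0 ≤ A + 3*t - 2) hx4, mul_nonneg (by linarith : 0 ≤ A + 1 - 3*t) hx4,
      mul_nonneg (by linarith : 0 ≤ A - 2/3) hx4, mul_nonneg (by linarith : 0 ≤ A - 2/3) h1x4,
      mul_nonneg (by linarith : 0 ≤ A + 1 - 3*s) h1x4, mul_nonneg (by linarith : 0 ≤ A + 3*s - 2) h1x4]

theorem maxNegLagrangeR_le {σ : ℝ} (hσ : ∀ x ∈ unitCube 5, ∀ k, 1 - 6 * lagrangeR s t k x ≤ σ) :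
    6 * maxNegLagrangeR s t + 1 ≤ σ := by
  have hc := hσ ![0, 0, 0, 1, 0] (fun i => by fin_cases i <;> simp) 2
  have h2t := hσ ![0, 0, 0, 0, 1] (fun i => by fin_cases i <;> simp) 0
  have h3t := hσ ![0, 1, 0, 0, 1] (fun i => by fin_cases i <;> simp) 1
  have h3s := hσ ![1, 0, 0, 0, 0] (fun i => by fin_cases i <;> simp) 4
  have h2s := hσ 0 (fun i => by simp) 5
  simp only [lagrangeR, lagrangeCoeffR, lagrangeConstR, Fin.sum_univ_five, Fin.isValue,
      Matrix.cons_val, Matrix.cons_val_zero, Matrix.cons_val_one, Matrix.cons_val',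
      Matrix.cons_val_fin_one, Pi.zero_apply] at hc h2t h3t h3s h2s
  suffices maxNegLagrangeR s t ≤ (σ - 1) / 6 by linarith
  simp only [maxNegLagrangeR, max_le_iff]
  refine ⟨?_, ?_, ?_, ?_, ?_⟩ <;> linarith

theorem two_thirds_lt_maxNegLagrangeR
    (h : s ∉ Set.Icc (4/9 : ℝ) (5/9) ∨ t ∉ Set.Icc (4/9 : ℝ) (5/9)) :
    2/3 < maxNegLagrangeR s t := by
  simp only [maxNegLagrangeR, lt_max_iff]
  simp only [Set.mem_Icc, not_and_or, not_le] at h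
  rcases h with (h | h) | (h | h)
  · exact .inr (.inl (by linarith))
  · exact .inr (.inr (.inl (by linarith)))
  · exact .inr (.inr (.inr (.inl (by linarith))))
  · exact .inr (.inr (.inr (.inr (by linarith))))

end Rst

/-- for `1/3 ≤ s,t ≤ 2/3` with `s ∉ [4/9,5/9]` or `t ∉ [4/9,5/9]`,
`ξ(R(s,t)) = 6·max{2/3, 2−3s, 3s−1, 2−3t, 3t−1} + 1 > 5`. -/
theorem Rst_nonextremal (s t : ℝ) (hs : s ∈ Set.Icc (1/3 : ℝ) (2/3))
    (ht : t ∈ Set.Icc (1/3 : ℝ) (2/3))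
    (h : s ∉ Set.Icc (4/9 : ℝ) (5/9) ∨ t ∉ Set.Icc (4/9 : ℝ) (5/9)) :
    xiVal (Rverts s t) =
      6 * max (2/3 : ℝ) (max (2 - 3*s) (max (3*s - 1) (max (2 - 3*t) (3*t - 1)))) + 1 ∧
    5 < xiVal (Rverts s t) := by
  have hxi : xiVal (Rverts s t) = 6 * maxNegLagrangeR s t + 1 := by
    refine (isLagrangeBasis_lagrangeR s t).xiVal_eq
      ⟨⟨?_, fun x hx k => ?_⟩, fun σ hσ => maxNegLagrangeR_le fun x hx k => ?_⟩ <;> push_cast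
    · linarith [(le_maxNegLagrangeR s t).1]
    · linarith [neg_maxNegLagrangeR_le hs ht hx k]
    · have hσx := hσ.2 x hx k
      push_cast at hσx
      linarith
  exact ⟨hxi, by linarith [two_thirds_lt_maxNegLagrangeR h]⟩
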